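/- The Rook graph L₂(4) and the Shrikhande graph are not isomorphic: the neighborhood of every vertex in L₂(4) is a disjoint union of two triangles (contains K₃), while the neighborhood of every vertex of the Shrikhande graph induces a 6-cycle. -/

import Mathlib

/-- The Rook graph `L₂(4)` (as `K₄ □ K₄`). -/
def rookGraph : SimpleGraph (Fin 4 × Fin 4) :=
  SimpleGraph.fromRel (fun x y => x.1 = y.1 ∨ x.2 = y.2)

/-- The Shrikhande graph: the Cayley graph on `(ℤ/4ℤ)²` with connection set
`{±(1,0), ±(0,1), ±(1,1)}`. -/
def shrikhandeGraph : SimpleGraph (ZMod 4 × ZMod 4) :=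
  SimpleGraph.fromRel (fun x y =>
    x - y ∈ ({(1, 0), (-1, 0), (0, 1), (0, -1), (1, 1), (-1, -1)} :
      Set (ZMod 4 × ZMod 4)))

/-!
A graph isomorphism restricts to an isomorphism between the graphs induced on corresponding
vertex neighbourhoods. In the Rook graph the three other vertices of a row form a triangle in the
neighbourhood of each vertex of that row. The Shrikhande graph is a Cayley graph, so every vertex
neighbourhood is a translate of the neighbourhood of `0`, which induces a 6-cycle; an even cycle
is bipartite, hence triangle-free.
-/

namespace SimpleGraph

variable {V W : Type*} {G : SimpleGraph V} {H : SimpleGraph W}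

def Iso.induceNeighborSet (φ : G ≃g H) (v : V) :
    G.induce (G.neighborSet v) ≃g H.induce (H.neighborSet (φ v)) where
  toEquiv := φ.mapNeighborSet v
  map_rel_iff' := φ.map_adj_iff

theorem not_cliqueFree_three_induce_neighborSet {v a b c : V} (ha : a ∈ G.neighborSet v)
    (hb : b ∈ G.neighborSet v) (hc : c ∈ G.neighborSet v) (hab : G.Adj a b) (hbc : G.Adj b c)
    (hac : G.Adj a c) : ¬ (G.induce (G.neighborSet v)).CliqueFree 3 := by
  classical
  refine fun h => h {⟨a, ha⟩, ⟨b, hb⟩, ⟨c, hc⟩} ?_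
  exact is3Clique_triple_iff.2 ⟨hab, hac, hbc⟩

theorem cycleGraph_cliqueFree_three_of_even {n : ℕ} (hn : Even n) :
    (cycleGraph n).CliqueFree 3 :=
  (cycleGraph.bicoloring_of_even n hn).colorable.cliqueFree (by norm_num)

end SimpleGraph

open SimpleGraph

instance : DecidableRel rookGraph.Adj := fun _ _ =>
  decidable_of_iff' _ (fromRel_adj _ _ _)

instance : DecidableRel shrikhandeGraph.Adj := fun _ _ =>
  decidable_of_iff' _ (fromRel_adj _ _ _)

theorem rookGraph_exists_triangle_in_neighborSet (v : Fin 4 × Fin 4) : ∃ a b c,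
      a ∈ rookGraph.neighborSet v ∧ b ∈ rookGraph.neighborSet v ∧
        c ∈ rookGraph.neighborSet v ∧
      rookGraph.Adj a b ∧ rookGraph.Adj b c ∧ rookGraph.Adj a c := by
  refine ⟨(v.1, v.2 + 1), (v.1, v.2 + 2), (v.1, v.2 + 3), ?_⟩
  revert v
  decide

theorem shrikhandeGraph_adj_add_left (v a b : ZMod 4 × ZMod 4) :
    shrikhandeGraph.Adj (v + a) (v + b) ↔ shrikhandeGraph.Adj a b := by
  simp only [shrikhandeGraph, fromRel_adj, add_sub_add_left_eq_sub, ne_eq, add_right_inj]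

def shrikhandeGraph.translate (v : ZMod 4 × ZMod 4) : shrikhandeGraph ≃g shrikhandeGraph where
  toEquiv := Equiv.addLeft v
  map_rel_iff' := shrikhandeGraph_adj_add_left v _ _

-- Consecutive entries, cyclically, differ by one of `±(1,0), ±(0,1), ±(1,1)`.
def shrikhandeGraph.neighborCycle (i : Fin 6) : shrikhandeGraph.neighborSet 0 :=
  ⟨![(1, 0), (1, 1), (0, 1), (-1, 0), (-1, -1), (0, -1)] i, by revert i; decide⟩

noncomputable def shrikhandeGraph.cycleGraphIsoInduceNeighborSetZero :
    cycleGraph 6 ≃g shrikhandeGraph.induce (shrikhandeGraph.neighborSet 0) where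
  toEquiv := Equiv.ofBijective shrikhandeGraph.neighborCycle (by decide)
  map_rel_iff' := by decide

theorem shrikhandeGraph_induce_neighborSet_nonempty_iso_cycleGraph (v : ZMod 4 × ZMod 4) :
    Nonempty (shrikhandeGraph.induce (shrikhandeGraph.neighborSet v) ≃g cycleGraph 6) := by
  have e := ((shrikhandeGraph.translate v).induceNeighborSet 0).comp
    shrikhandeGraph.cycleGraphIsoInduceNeighborSetZero
  rw [show shrikhandeGraph.translate v 0 = v from add_zero v] at e
  exact ⟨e.symm⟩

open scoped Classical in
/-- The Rook graph `L₂(4)` and the Shrikhande graph are not isomorphic: every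
vertex neighborhood of the Rook graph contains a triangle, every vertex
neighborhood of the Shrikhande graph induces a 6-cycle, and there is no graph
isomorphism between the two graphs. -/
theorem rook_shrikhande_not_isomorphic :
    (∀ v : Fin 4 × Fin 4, ∃ a b c,
      a ∈ rookGraph.neighborSet v ∧ b ∈ rookGraph.neighborSet v ∧
        c ∈ rookGraph.neighborSet v ∧
      rookGraph.Adj a b ∧ rookGraph.Adj b c ∧ rookGraph.Adj a c) ∧
    (∀ v : ZMod 4 × ZMod 4,
      Nonempty (shrikhandeGraph.induce (shrikhandeGraph.neighborSet v) ≃g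
        SimpleGraph.cycleGraph 6)) ∧
    ¬ Nonempty (rookGraph ≃g shrikhandeGraph) := by
  refine ⟨rookGraph_exists_triangle_in_neighborSet,
    shrikhandeGraph_induce_neighborSet_nonempty_iso_cycleGraph, ?_⟩
  rintro ⟨φ⟩
  obtain ⟨a, b, c, ha, hb, hc, hab, hbc, hac⟩ := rookGraph_exists_triangle_in_neighborSet 0
  obtain ⟨ψ⟩ := shrikhandeGraph_induce_neighborSet_nonempty_iso_cycleGraph (φ 0)
  exact not_cliqueFree_three_induce_neighborSet ha hb hc hab hbc hac <|
    (cycleGraph_cliqueFree_three_of_even (by decide)).comap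
      (ψ.comp (φ.induceNeighborSet 0)).isContained
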